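/- Let ε > 0 and let f, g : (0,∞) → ℝ be positive functions with g non-decreasing and f(t) → 0 as t → 0⁺. Then there exists a family of sets S(ρ) ⊆ ℝ indexed by ρ ∈ (0,∞) such that: (1) S(τ) ⊆ S(ρ) whenever 0 < τ ≤ ρ; (2) for every ρ ∈ (0,∞) there exist P, Q ∈ ℝ with S(ρ) ⊆ B(P, g(ρ)) ∪ B(Q, g(ρ)); and (3) whenever A ⊆ ℝ has the property that for all 0 < ρ ≤ ε and all P ∈ S(ρ) there exists Q ∈ A with |Q - P| ≤ f(ρ), the set A is infinite. -/
import Mathlib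


open Set Filter

theorem stmt_0 (ε : ℝ) (hε : 0 < ε) (f g : ℝ → ℝ)
    (hf_pos : ∀ t > 0, 0 < f t) (hg_pos : ∀ t > 0, 0 < g t)
    (hg_mono : ∀ s t : ℝ, 0 < s → s ≤ t → g s ≤ g t)
    (hf_lim : Tendsto f (nhdsWithin 0 (Set.Ioi 0)) (nhds 0)) :
    ∃ S : ℝ → Set ℝ,
      (∀ τ ρ : ℝ, 0 < τ → τ ≤ ρ → S τ ⊆ S ρ) ∧
      (∀ ρ > (0 : ℝ), ∃ P Q : ℝ, S ρ ⊆ Metric.ball P (g ρ) ∪ Metric.ball Q (g ρ)) ∧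
      (∀ A : Set ℝ,
        (∀ ρ : ℝ, 0 < ρ → ρ ≤ ε → ∀ P ∈ S ρ, ∃ Q ∈ A, |Q - P| ≤ f ρ) →
        A.Infinite) := by
  classical
  -- From the limit hypothesis: arbitrarily small points where f is small.
  have key : ∀ p δ : ℝ, 0 < p → 0 < δ → ∃ x : ℝ, 0 < x ∧ x < p ∧ f x < δ := by
    intro p δ hp hδ
    have h1 : ∀ᶠ x in nhdsWithin 0 (Set.Ioi 0), f x < δ := hf_lim.eventually (gt_mem_nhds hδ)
    have h2 : ∀ᶠ x in nhdsWithin 0 (Set.Ioi 0), x < p :=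
      (gt_mem_nhds hp).filter_mono nhdsWithin_le_nhds
    have h3 : ∀ᶠ x in nhdsWithin 0 (Set.Ioi (0:ℝ)), x ∈ Set.Ioi (0:ℝ) :=
      eventually_mem_nhdsWithin
    obtain ⟨x, hx1, hx2, hx3⟩ := (h1.and (h2.and h3)).exists
    exact ⟨x, hx3, hx2, hx1⟩
  have H : ∀ k : ℕ, ∀ p : ℝ, ∃ x : ℝ, 0 < p → (0 < x ∧ x < p ∧ f x < g p / 2 ^ (k + 4)) := by
    intro k p
    by_cases hp : 0 < p
    · obtain ⟨x, h⟩ := key p (g p / 2 ^ (k + 4)) hp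
        (div_pos (hg_pos p hp) (by positivity))
      exact ⟨x, fun _ => h⟩
    · exact ⟨1, fun h => absurd h hp⟩
  choose F hF using H
  set t : ℕ → ℝ := fun n => Nat.rec ε (fun k prev => F k prev) n with ht
  have ht0 : t 0 = ε := rfl
  have htsucc : ∀ k, t (k + 1) = F k (t k) := fun k => rfl
  have htpos : ∀ k, 0 < t k := by
    intro k
    induction k with
    | zero => exact hε
    | succ k ih => rw [htsucc]; exact (hF k (t k) ih).1
  have htlt : ∀ k, t (k + 1) < t k := fun k => by
    rw [htsucc]; exact (hF k (t k) (htpos k)).2.1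
  have htf : ∀ k, f (t (k + 1)) < g (t k) / 2 ^ (k + 4) := fun k => by
    rw [htsucc]; exact (hF k (t k) (htpos k)).2.2
  have htanti : StrictAnti t := strictAnti_nat_of_succ_lt htlt
  have htle : ∀ k j : ℕ, k ≤ j → t j ≤ t k := fun k j h => htanti.antitone h
  have htε : ∀ k, t k ≤ ε := fun k => by
    have := htle 0 k (Nat.zero_le k); rwa [ht0] at this
  set y : ℕ → ℝ := fun k => g (t k) / 2 ^ k with hy
  have hgtpos : ∀ k, 0 < g (t k) := fun k => hg_pos _ (htpos k)
  have hypos : ∀ k, 0 < y k := fun k => div_pos (hgtpos k) (by positivity)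
  have hymono : ∀ k j : ℕ, k ≤ j → y j ≤ y k := by
    intro k j hkj
    exact div_le_div₀ (hgtpos k).le
      (hg_mono _ _ (htpos j) (htle k j hkj)) (by positivity)
      (pow_le_pow_right₀ one_le_two hkj)
  -- gap estimate: for k < j, y k - y j ≥ g (t k) / 2 ^ (k+1)
  have hgap : ∀ k j : ℕ, k < j → g (t k) / 2 ^ (k + 1) ≤ y k - y j := by
    intro k j hkj
    have h1 : y j ≤ y (k + 1) := hymono (k + 1) j hkj
    have h2 : y (k + 1) ≤ g (t k) / 2 ^ (k + 1) := by
      have := hg_mono _ _ (htpos (k + 1)) (htlt k).le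
      exact div_le_div₀ (hgtpos k).le this (by positivity) le_rfl
    have h3 : y k - g (t k) / 2 ^ (k + 1) = g (t k) / 2 ^ (k + 1) := by
      show g (t k) / 2 ^ k - g (t k) / 2 ^ (k + 1) = g (t k) / 2 ^ (k + 1)
      rw [pow_succ]
      have : (2:ℝ) ^ k ≠ 0 := by positivity
      field_simp
      ring
    nlinarith [h1, h2, h3]
  -- separation beats approximation radii
  have hsep : ∀ k j : ℕ, k < j →
      f (t (k + 1)) + f (t (j + 1)) < y k - y j := by
    intro k j hkj
    have h1 : f (t (j + 1)) < g (t k) / 2 ^ (k + 4) := by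
      refine lt_of_lt_of_le (htf j) ?_
      exact div_le_div₀ (hgtpos k).le
        (hg_mono _ _ (htpos j) (htle k j hkj.le)) (by positivity)
        (pow_le_pow_right₀ one_le_two (by omega))
    have h2 := htf k
    have h3 := hgap k j hkj
    have hpow : (2:ℝ) ^ (k + 4) = 2 ^ (k + 1) * 8 := by
      rw [show k + 4 = (k + 1) + 3 by omega, pow_add]; norm_num
    have hp1 : (0:ℝ) < 2 ^ (k + 1) := by positivity
    rw [hpow] at h1 h2
    have h4 : g (t k) / (2 ^ (k + 1) * 8) ≤ g (t k) / 2 ^ (k + 1) / 2 := by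
      rw [div_div]
      apply div_le_div₀ (hgtpos k).le le_rfl (by positivity)
      nlinarith
    nlinarith
  refine ⟨fun ρ => {x | ∃ k : ℕ, t (k + 1) ≤ ρ ∧ x = y k}, ?_, ?_, ?_⟩
  · rintro τ ρ hτ hle x ⟨k, hk, rfl⟩
    exact ⟨k, hk.trans hle, rfl⟩
  · intro ρ hρ
    by_cases hex : ∃ k : ℕ, t (k + 1) ≤ ρ
    · refine ⟨y (Nat.find hex), 0, ?_⟩
      rintro x ⟨k, hk, rfl⟩
      have hk0 : Nat.find hex ≤ k := by
        by_contra h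
        push_neg at h
        exact Nat.find_min hex h hk
      rcases eq_or_lt_of_le hk0 with he | hl
      · left
        simp only [Metric.mem_ball, he]
        simpa using hg_pos ρ hρ
      · right
        have h1 : t k ≤ ρ := le_trans (htle (Nat.find hex + 1) k hl) (Nat.find_spec hex)
        have h2 : y k < g (t k) := by
          apply div_lt_self (hgtpos k)
          exact one_lt_pow₀ one_lt_two (by omega)
        have h3 : g (t k) ≤ g ρ := hg_mono _ _ (htpos k) h1
        simp only [Metric.mem_ball, Real.dist_0_eq_abs]
        rw [abs_of_pos (hypos k)]
        linarith
    · exact ⟨0, 0, by rintro x ⟨k, hk, rfl⟩; exact absurd ⟨k, hk⟩ hex⟩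
  · intro A hA
    have hQ : ∀ k : ℕ, ∃ q, q ∈ A ∧ |q - y k| ≤ f (t (k + 1)) := by
      intro k
      obtain ⟨q, hqA, hqd⟩ := hA (t (k + 1)) (htpos (k + 1))
        ((htlt k).le.trans (htε k)) (y k) ⟨k, le_rfl, rfl⟩
      exact ⟨q, hqA, hqd⟩
    choose Q hQA hQd using hQ
    have main : ∀ k j : ℕ, k < j → Q k ≠ Q j := by
      intro k j hkj heq
      have h1 : |y k - y j| ≤ f (t (k + 1)) + f (t (j + 1)) := by
        calc |y k - y j| = |(Q k - y j) - (Q k - y k)| := by ring_nf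
          _ ≤ |Q k - y j| + |Q k - y k| := abs_sub _ _
          _ = |Q j - y j| + |Q k - y k| := by rw [heq]
          _ ≤ f (t (j + 1)) + f (t (k + 1)) := add_le_add (hQd j) (hQd k)
          _ = f (t (k + 1)) + f (t (j + 1)) := by ring
      have h2 := hsep k j hkj
      have h3 : y k - y j ≤ |y k - y j| := le_abs_self _
      linarith
    have hinj : Function.Injective Q := by
      intro k j heq
      by_contra hne
      rcases lt_or_gt_of_ne hne with h | h
      · exact main k j h heq
      · exact main j k h heq.symm
    exact Set.infinite_of_injective_forall_mem hinj hQA
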